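/- Let p ≥ q ≥ 1, let n ≥ 1, and let B be a real p×q matrix. For any two positive divisors k and l of n, the (np+q)-square matrices F_k ⊕ 0_{(n − n/k)p + (1−k)q} and F_l ⊕ 0_{(n − n/l)p + (1−l)q} are cospectral, i.e., they have the same characteristic polynomial (after transporting along a bijection of their index types, both of cardinality np+q). -/

import Mathlib

/-!
`F_k = C R` with `C = diag(U, V)`, `R = [[0, Vᵀ], [Uᵀ, 0]]`, where `U` stacks `n/k` copies of `B`
and `V` stacks `k` copies of `I_q`. Sylvester's identity `X^{2q} χ(CR) = X^{kq+(n/k)p} χ(RC)` and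
`RC = [[0, k I], [(n/k) BᵀB, 0]]` reduce `χ(F_k)` to a `2q × 2q` matrix; moving the factor `k`
across by `χ(PQ) = χ(QP)` with `Q = diag(I, k I)` turns it into `[[0, I], [n BᵀB, 0]]`. Hence
`X^{2q}` times the characteristic polynomial of the padded `F_k` is independent of `k`.
-/

open Matrix

/-- The matrix `F_k` of the paper's generalization of Construction I. -/
def matF (p q n k : ℕ) (B : Matrix (Fin p) (Fin q) ℝ) :
    Matrix ((Fin (n / k) × Fin p) ⊕ Fin k × Fin q) ((Fin (n / k) × Fin p) ⊕ Fin k × Fin q) ℝ :=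
  Matrix.of fun a b =>
    match a, b with
    | Sum.inl (_, i), Sum.inr (_, j) => B i j
    | Sum.inr (_, j), Sum.inl (_, i) => B i j
    | _, _ => 0

open Polynomial

namespace Matrix

-- Without the ascriptions `*` elaborates to the `CStarMatrix` product, which `mul_apply` misses.
theorem submatrix_id_snd_mul_submatrix_snd_id {R α β γ ι : Type*} [Semiring R] [Fintype β]
    [Fintype ι] (N : Matrix α β R) (M : Matrix β γ R) :
    (N.submatrix id Prod.snd : Matrix α (ι × β) R) *
        (M.submatrix Prod.snd id : Matrix (ι × β) γ R) =
      Fintype.card ι • (N * M) := by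
  ext i j
  simp [Matrix.mul_apply, Fintype.sum_prod_type]

variable {R : Type*} [CommRing R] {α β γ δ : Type*} [Fintype α] [Fintype β] [Fintype γ]
  [Fintype δ] [DecidableEq α] [DecidableEq β] [DecidableEq γ] [DecidableEq δ]

theorem charpoly_submatrix_equiv_self (e : α ≃ β) (M : Matrix β β R) :
    (M.submatrix e e).charpoly = M.charpoly :=
  charpoly_reindex e.symm M

theorem charpoly_fromBlocks_zero₁₁_zero₂₂_mul_comm' (U : Matrix α γ R) (V : Matrix β δ R)
    (W : Matrix γ β R) (Z : Matrix δ α R) :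
    X ^ (Fintype.card γ + Fintype.card δ) * (fromBlocks 0 (U * W) (V * Z) 0).charpoly =
      X ^ (Fintype.card α + Fintype.card β) * (fromBlocks 0 (W * V) (Z * U) 0).charpoly := by
  simpa [fromBlocks_multiply] using charpoly_mul_comm' (fromBlocks U 0 0 V) (fromBlocks 0 W Z 0)

theorem charpoly_fromBlocks_zero₁₁_zero₂₂_smul_comm (c : R) (A : Matrix α β R)
    (B : Matrix β α R) :
    (fromBlocks 0 (c • A) B 0).charpoly = (fromBlocks 0 A (c • B) 0).charpoly := by
  simpa [fromBlocks_multiply] using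
    charpoly_mul_comm (fromBlocks 0 A B 0) (fromBlocks 1 0 0 (c • 1))

end Matrix

theorem matF_eq_fromBlocks (p q n k : ℕ) (B : Matrix (Fin p) (Fin q) ℝ) :
    matF p q n k B =
      fromBlocks 0 (B.submatrix Prod.snd Prod.snd) (Bᵀ.submatrix Prod.snd Prod.snd) 0 := by
  ext (⟨i, a⟩ | ⟨j, b⟩) (⟨i', a'⟩ | ⟨j', b'⟩) <;> rfl

theorem charpoly_matF (p q n k : ℕ) (hk : k ∣ n) (B : Matrix (Fin p) (Fin q) ℝ) :
    X ^ (q + q) * (matF p q n k B).charpoly =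
      X ^ (n / k * p + k * q) * (fromBlocks 0 1 (n • (Bᵀ * B)) 0).charpoly := by
  have h := charpoly_fromBlocks_zero₁₁_zero₂₂_mul_comm'
    (B.submatrix (Prod.snd : Fin (n / k) × Fin p → Fin p) id)
    ((1 : Matrix (Fin q) (Fin q) ℝ).submatrix (Prod.snd : Fin k × Fin q → Fin q) id)
    ((1 : Matrix (Fin q) (Fin q) ℝ).submatrix id Prod.snd) (Bᵀ.submatrix id Prod.snd)
  rw [submatrix_id_snd_mul_submatrix_snd_id, submatrix_id_snd_mul_submatrix_snd_id,
    ← submatrix_mul _ _ _ id _ Function.bijective_id,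
    ← submatrix_mul _ _ _ id _ Function.bijective_id] at h
  have hn : n • (Bᵀ * B) = k • (n / k) • (Bᵀ * B) := by
    rw [← mul_nsmul', Nat.mul_div_cancel' hk]
  rw [matF_eq_fromBlocks, hn, ← Nat.cast_smul_eq_nsmul ℝ k,
    ← charpoly_fromBlocks_zero₁₁_zero₂₂_smul_comm, Nat.cast_smul_eq_nsmul]
  simpa only [Fintype.card_fin, Fintype.card_prod, Matrix.mul_one, Matrix.one_mul] using h

theorem matF_dim_le (p q n d : ℕ) (hpq : q ≤ p) (hn : 1 ≤ n) (hd : d ∣ n) :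
    d * q + n / d * p ≤ n * p + q := by
  obtain ⟨m, rfl⟩ := hd
  have hd : 0 < d := Nat.pos_of_mul_pos_right hn
  have hm : 0 < m := Nat.pos_of_mul_pos_left hn
  rw [Nat.mul_div_cancel_left m hd]
  obtain ⟨d, rfl⟩ : ∃ d', d = d' + 1 := ⟨d - 1, by omega⟩
  have := Nat.mul_le_mul_left d (hpq.trans (Nat.le_mul_of_pos_left p hm))
  nlinarith

theorem card_matF_padded_index (p q n d : ℕ) (hpq : q ≤ p) (hn : 1 ≤ n) (hd : d ∣ n) :
    Fintype.card
      (((Fin (n / d) × Fin p) ⊕ Fin d × Fin q) ⊕ Fin (n * p + q - (d * q + n / d * p))) =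
      n * p + q := by
  simp only [Fintype.card_sum, Fintype.card_prod, Fintype.card_fin]
  have := matF_dim_le p q n d hpq hn hd
  omega

theorem charpoly_fromBlocks_matF_zero (p q n k : ℕ) (hpq : q ≤ p) (hn : 1 ≤ n) (hk : k ∣ n)
    (B : Matrix (Fin p) (Fin q) ℝ) :
    X ^ (q + q) * (fromBlocks (matF p q n k B) 0 0
        (0 : Matrix (Fin (n * p + q - (k * q + n / k * p)))
          (Fin (n * p + q - (k * q + n / k * p))) ℝ)).charpoly =
      X ^ (n * p + q) * (fromBlocks 0 1 (n • (Bᵀ * B)) 0).charpoly := by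
  rw [charpoly_fromBlocks_zero₁₂, charpoly_zero, Fintype.card_fin, ← mul_assoc,
    charpoly_matF p q n k hk, mul_right_comm, ← pow_add]
  congr 2
  have := matF_dim_le p q n k hpq hn hk
  omega

theorem matF_cospectral_general (p q n k l : ℕ) (hpq : q ≤ p) (hn : 1 ≤ n)
    (hk : k ∣ n) (hl : l ∣ n)
    (B : Matrix (Fin p) (Fin q) ℝ) :
    ∃ e : (((Fin (n / k) × Fin p) ⊕ Fin k × Fin q) ⊕ Fin (n * p + q - (k * q + n / k * p))) ≃
        (((Fin (n / l) × Fin p) ⊕ Fin l × Fin q) ⊕ Fin (n * p + q - (l * q + n / l * p))),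
      (Matrix.fromBlocks (matF p q n k B) 0 0
          (0 : Matrix (Fin (n * p + q - (k * q + n / k * p)))
            (Fin (n * p + q - (k * q + n / k * p))) ℝ)).charpoly =
        ((Matrix.fromBlocks (matF p q n l B) 0 0
            (0 : Matrix (Fin (n * p + q - (l * q + n / l * p)))
              (Fin (n * p + q - (l * q + n / l * p))) ℝ)).submatrix e e).charpoly := by
  have hcard := (card_matF_padded_index p q n k hpq hn hk).trans
    (card_matF_padded_index p q n l hpq hn hl).symm
  refine ⟨Fintype.equivOfCardEq hcard, (isRegular_X_pow (q + q)).left ?_⟩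
  dsimp only
  rw [charpoly_submatrix_equiv_self, charpoly_fromBlocks_matF_zero p q n k hpq hn hk,
    charpoly_fromBlocks_matF_zero p q n l hpq hn hl]

/-- For any two positive divisors `k` and `l` of `n`, the `(np+q)`-square matrices
`F_k ⊕ 0_{(n − n/k)p + (1−k)q}` and `F_l ⊕ 0_{(n − n/l)p + (1−l)q}` are cospectral.
(The number of padding zeros `(n − n/k)p + (1−k)q = np + q − (kq + (n/k)p)`.) -/
theorem matF_cospectral (p q n k l : ℕ) (hq : 1 ≤ q) (hpq : q ≤ p) (hn : 1 ≤ n)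
    (hk : k ∣ n) (hk1 : 1 ≤ k) (hl : l ∣ n) (hl1 : 1 ≤ l)
    (B : Matrix (Fin p) (Fin q) ℝ) :
    ∃ e : (((Fin (n / k) × Fin p) ⊕ Fin k × Fin q) ⊕ Fin (n * p + q - (k * q + n / k * p))) ≃
        (((Fin (n / l) × Fin p) ⊕ Fin l × Fin q) ⊕ Fin (n * p + q - (l * q + n / l * p))),
      (Matrix.fromBlocks (matF p q n k B) 0 0
          (0 : Matrix (Fin (n * p + q - (k * q + n / k * p)))
            (Fin (n * p + q - (k * q + n / k * p))) ℝ)).charpoly =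
        ((Matrix.fromBlocks (matF p q n l B) 0 0
            (0 : Matrix (Fin (n * p + q - (l * q + n / l * p)))
              (Fin (n * p + q - (l * q + n / l * p))) ℝ)).submatrix e e).charpoly :=
  matF_cospectral_general p q n k l hpq hn hk hl B
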